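/- arXiv:2105.14435 — 7 statements merged into one kernel-verified Lean document; each statement's English description precedes it below -/
import Mathlib

section
/- Let S be a POPS in which multiplication is strict (x ∘ ⊥ = ⊥ for all x). Then the subset S + ⊥ := {x + ⊥ : x ∈ S}, with the operations + and ∘, forms a commutative semiring with additive identity ⊥ = 0 + ⊥ and multiplicative identity 1 + ⊥; in particular absorption holds: (x+⊥) ∘ ⊥ = ⊥ for all x. -/
/-! Since `⊥ ≤ 0`, monotonicity of `+` gives `⊥ + ⊥ ≤ 0 + ⊥ = ⊥`, so `⊥` is additively idempotent.
Hence the `⊥`s produced by `(x + ⊥) + (y + ⊥)`, and, by distributivity and strictness, by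
`(x + ⊥) * (y + ⊥)`, collapse into one, which is what makes `S + ⊥` closed under both operations. -/

/-- A partially ordered pre-semiring (POPS). -/
class POPS (S : Type*) extends AddCommMonoid S, CommMonoid S, PartialOrder S, OrderBot S where
  mul_add : ∀ a b c : S, a * (b + c) = a * b + a * c
  add_mono : ∀ a b c : S, a ≤ b → a + c ≤ b + c
  mul_mono : ∀ a b c : S, a ≤ b → a * c ≤ b * c

namespace POPS

variable {S : Type*} [POPS S]

theorem bot_add_bot : (⊥ : S) + ⊥ = ⊥ :=
  le_antisymm (by simpa using add_mono (⊥ : S) 0 ⊥ bot_le) bot_le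

theorem add_bot_add_bot (x y : S) : (x + ⊥) + (y + ⊥) = (x + y) + ⊥ := by
  rw [add_add_add_comm, bot_add_bot]

theorem add_bot_add_bot_self (x : S) : (x + ⊥) + ⊥ = x + ⊥ := by
  rw [add_assoc, bot_add_bot]

theorem add_bot_mul_add_bot (hstrict : ∀ x : S, x * ⊥ = ⊥) (x y : S) :
    (x + ⊥) * (y + ⊥) = (x * y) + ⊥ := by
  rw [POPS.mul_add, hstrict, mul_comm (x + ⊥) y, POPS.mul_add, hstrict, mul_comm y x,
    add_bot_add_bot_self]

end POPS

/-- If multiplication in a POPS is strict (`x * ⊥ = ⊥`), then the subset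
`S + ⊥ = {x + ⊥ : x ∈ S}` is a commutative semiring under `+` and `*`:
it is closed under both operations, `⊥ = 0 + ⊥` is the additive identity,
`1 + ⊥` is the multiplicative identity, and absorption holds. -/
theorem add_bot_semiring {S : Type*} [POPS S]
    (hstrict : ∀ x : S, x * ⊥ = ⊥) :
    ((0 : S) + ⊥ = ⊥) ∧
    (∀ x y : S, (x + ⊥) + (y + ⊥) = (x + y) + ⊥) ∧
    (∀ x y : S, (x + ⊥) * (y + ⊥) = (x * y) + ⊥) ∧
    (∀ x : S, (x + ⊥) + ⊥ = x + ⊥) ∧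
    (∀ x : S, (x + ⊥) * ((1 : S) + ⊥) = x + ⊥) ∧
    (∀ x : S, (x + ⊥) * ⊥ = ⊥) :=
  ⟨zero_add _, POPS.add_bot_add_bot, POPS.add_bot_mul_add_bot hstrict,
    POPS.add_bot_add_bot_self,
    fun x => by rw [POPS.add_bot_mul_add_bot hstrict, mul_one],
    fun x => hstrict _⟩
end

section
/- There is no POPS extension of the real semiring (ℝ, +, ×, 0, 1) that is a semiring: if S is a POPS whose underlying pre-semiring structure restricts on ℝ ⊆ S to the usual operations, then the absorption law 0 ∘ x = 0 fails for some x ∈ S. -/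
section

variable {S : Type*} [POPS S]

theorem POPS.zero_le_of_one_add_eq_zero (hzero : ∀ x : S, 0 * x = 0) {b : S} (hb : 1 + b = 0) :
    0 ≤ b :=
  calc (0 : S) = ⊥ * (1 + b) := by rw [← hzero ⊥, hb, mul_comm]
    _ = ⊥ + ⊥ * b := by rw [POPS.mul_add, mul_one]
    _ ≤ 0 + ⊥ * b := POPS.add_mono _ _ _ bot_le
    _ ≤ 0 + b := by
      rw [add_comm 0, add_comm 0]
      exact POPS.add_mono _ _ _ (by simpa only [one_mul] using POPS.mul_mono ⊥ 1 b bot_le)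
    _ = b := zero_add b

theorem POPS.one_eq_zero_of_one_add_eq_zero (hzero : ∀ x : S, 0 * x = 0) {b : S} (hb : 1 + b = 0)
    (hbb : b * b = 1) : (1 : S) = 0 := by
  have hb_nonneg : 0 ≤ b := POPS.zero_le_of_one_add_eq_zero hzero hb
  have h_one_nonneg : (0 : S) ≤ 1 := by
    simpa only [hzero, hbb] using POPS.mul_mono 0 b b hb_nonneg
  have hb_nonpos : b ≤ 0 := by
    simpa only [zero_add, hb] using POPS.add_mono 0 1 b h_one_nonneg
  rw [← hb, le_antisymm hb_nonpos hb_nonneg, add_zero]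

end

/-- No POPS extension of the real semiring `(ℝ, +, ×, 0, 1)` is a semiring:
absorption `0 * x = 0` must fail for some `x`. Here `ℝ ⊆ S` is formalized by
an injection `i : ℝ → S` preserving `+`, `*`, `0` and `1`. -/
theorem no_semiring_pops_extension_of_real {S : Type*} [POPS S]
    (i : ℝ → S) (hinj : Function.Injective i)
    (hadd : ∀ a b : ℝ, i (a + b) = i a + i b)
    (hmul : ∀ a b : ℝ, i (a * b) = i a * i b)
    (h0 : i 0 = 0) (h1 : i 1 = 1) :
    ∃ x : S, (0 : S) * x ≠ 0 := by
  by_contra! hzero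
  have h_sum : 1 + i (-1) = 0 := by rw [← h1, ← hadd, add_neg_cancel, h0]
  have h_sq : i (-1) * i (-1) = 1 := by rw [← hmul, neg_one_mul, neg_neg, h1]
  have h_one_eq_zero : i 1 = i 0 := by
    rw [h1, h0]
    exact POPS.one_eq_zero_of_one_add_eq_zero hzero h_sum h_sq
  exact one_ne_zero (hinj h_one_eq_zero)
end

section
/- Let L₁, L₂ be posets with least elements, and f : L₁ × L₂ → L₁, g : L₁ × L₂ → L₂ be monotone. Suppose for every u ∈ L₁ the function g_u(y) := g(u,y) is q-stable, and F(x) := f(x, g_x^(q)(⊥)) is p-stable. Then the pair (x̄, ȳ) with x̄ := F^(p)(⊥) and ȳ := g_{x̄}^(q)(⊥) is the least fixpoint of h := (f,g) on L₁ × L₂. -/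
/-!
Every fixpoint `(z₁, z₂)` of `h` bounds the iterates from `⊥`: first `g_{z₁}^(q)(⊥) ≤ z₂`, hence
`F z₁ ≤ f (z₁, z₂) = z₁`, hence `x̄ ≤ z₁`, and then `ȳ ≤ g_{z₁}^(q)(⊥) ≤ z₂` because
`u ↦ g_u^(q)(⊥)` is monotone. Stability makes `(x̄, ȳ)` itself a fixpoint.
-/

open Function

theorem Monotone.iterate_bot_le_of_map_le {α : Type*} [Preorder α] [OrderBot α] {φ : α → α}
    (hφ : Monotone φ) {z : α} (hz : φ z ≤ z) (n : ℕ) : φ^[n] ⊥ ≤ z :=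
  (hφ.iterate n bot_le).trans (hφ.antitone_iterate_of_map_le hz n.zero_le)

theorem Monotone.monotone_iterate_section_bot {α β : Type*} [Preorder α] [Preorder β]
    [OrderBot β] {g : α × β → β} (hg : Monotone g) (n : ℕ) :
    Monotone fun u : α => (fun y => g (u, y))^[n] ⊥ := fun _ _ huv =>
  Monotone.iterate_le_of_le (fun _ _ hy => hg (Prod.mk_le_mk_iff_right.2 hy))
    (fun _ => hg (Prod.mk_le_mk_iff_left.2 huv)) n ⊥

/-- Least fixpoint lemma over a product of posets. If `g_u := g (u, ·)` is
`q`-stable for every `u` and `F x := f (x, g_x^[q] ⊥)` is `p`-stable, then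
`(x̄, ȳ)` with `x̄ := F^[p] ⊥` and `ȳ := g_{x̄}^[q] ⊥` is the least fixpoint
of `h := (f, g)` on `L₁ × L₂`. -/
theorem lfp_product {L₁ L₂ : Type*} [PartialOrder L₁] [OrderBot L₁]
    [PartialOrder L₂] [OrderBot L₂]
    (f : L₁ × L₂ → L₁) (g : L₁ × L₂ → L₂) (hf : Monotone f) (hg : Monotone g)
    (p q : ℕ)
    (hgq : ∀ u : L₁, (fun y => g (u, y))^[q + 1] ⊥ = (fun y => g (u, y))^[q] ⊥)
    (hFp : (fun x => f (x, (fun y => g (x, y))^[q] ⊥))^[p + 1] ⊥ =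
           (fun x => f (x, (fun y => g (x, y))^[q] ⊥))^[p] ⊥) :
    letI F : L₁ → L₁ := fun x => f (x, (fun y => g (x, y))^[q] ⊥)
    letI xbar : L₁ := F^[p] ⊥
    letI ybar : L₂ := (fun y => g (xbar, y))^[q] ⊥
    (f (xbar, ybar) = xbar ∧ g (xbar, ybar) = ybar) ∧
      ∀ z : L₁ × L₂, (f z, g z) = z → (xbar, ybar) ≤ z := by
  set F : L₁ → L₁ := fun x => f (x, (fun y => g (x, y))^[q] ⊥)
  set xbar := F^[p] ⊥
  have hG := hg.monotone_iterate_section_bot q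
  refine ⟨⟨(iterate_succ_apply' F p ⊥).symm.trans hFp,
    (iterate_succ_apply' _ q ⊥).symm.trans (hgq xbar)⟩, ?_⟩
  rintro ⟨z₁, z₂⟩ hz
  obtain ⟨hz₁, hz₂⟩ := Prod.mk.inj hz
  have hgz : (fun y => g (z₁, y))^[q] ⊥ ≤ z₂ :=
    Monotone.iterate_bot_le_of_map_le (fun _ _ hy => hg (Prod.mk_le_mk_iff_right.2 hy)) hz₂.le q
  have hF : Monotone F := fun _ _ hab => hf (Prod.mk_le_mk.2 ⟨hab, hG hab⟩)
  have hxbar : xbar ≤ z₁ :=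
    hF.iterate_bot_le_of_map_le ((hf (Prod.mk_le_mk_iff_right.2 hgz)).trans hz₁.le) p
  exact Prod.mk_le_mk.2 ⟨hxbar, (hG hxbar).trans hgz⟩
end

section
/- Let S be a distributive dioid with difference operator b − a := ⋀{c : a + c ⊒ b}. Then for all a, b, c ∈ S: (a + b) − (a + c) = b − (a + c). -/
/-! When the order is the natural order of an idempotent addition, addition is the join, so
`a + b ⊑ (a + c) + d` splits into `a ⊑ (a + c) + d`, which always holds, and `b ⊑ (a + c) + d`.
The two sets whose infima define the differences are therefore equal. -/

section NaturalOrder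

variable {S : Type*} [AddCommSemigroup S] [SemilatticeSup S]
  (horder : ∀ a b : S, a ≤ b ↔ a + b = b)
include horder

theorem add_self_of_natural_order (a : S) : a + a = a :=
  (horder a a).1 le_rfl

theorem le_add_of_natural_order (a b : S) : a ≤ a + b := by
  rw [horder, ← add_assoc, add_self_of_natural_order horder]

theorem add_le_of_natural_order {a b c : S} (ha : a ≤ c) (hb : b ≤ c) : a + b ≤ c := by
  rw [horder, add_assoc, (horder b c).1 hb, (horder a c).1 ha]

theorem add_eq_sup_of_natural_order (a b : S) : a + b = a ⊔ b :=
  le_antisymm (add_le_of_natural_order horder le_sup_left le_sup_right)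
    (sup_le (le_add_of_natural_order horder a b)
      (add_comm b a ▸ le_add_of_natural_order horder b a))

end NaturalOrder

theorem dioid_minus_absorb_general {S : Type*} [CommSemiring S] [CompleteLattice S]
    (horder : ∀ a b : S, a ≤ b ↔ a + b = b) :
    ∀ a b c : S,
      sInf {d : S | a + b ≤ (a + c) + d} = sInf {d : S | b ≤ (a + c) + d} := by
  intro a b c
  simp only [add_eq_sup_of_natural_order horder, sup_le_iff, sup_assoc, le_sup_left, true_and]

/-- In a distributive dioid with difference `b − a := ⋀{c : b ⊑ a + c}`, we
have `(a + b) − (a + c) = b − (a + c)` for all `a, b, c`. -/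
theorem dioid_minus_absorb {S : Type*} [CommSemiring S] [CompleteLattice S]
    (hidem : ∀ a : S, a + a = a)
    (horder : ∀ a b : S, a ≤ b ↔ a + b = b)
    (hdist : ∀ (a : S) (C : Set S), a + sInf C = sInf ((fun c => a + c) '' C)) :
    ∀ a b c : S,
      sInf {d : S | a + b ≤ (a + c) + d} = sInf {d : S | b ≤ (a + c) + d} :=
  dioid_minus_absorb_general horder
end

section
/- Let S be a commutative semiring and let a ∈ S be p-stable, meaning that a^(p) := 1 + a + a² + ⋯ + a^p satisfies a^(p+1-sum) = a^(p) (i.e., 1 + a + ⋯ + a^(p+1) = 1 + a + ⋯ + a^p). Then for the affine function f(x) = a₀ + a₁x with a₁ p-stable, f is (p+1)-stable: f^(p+2)(0) = f^(p+1)(0) = a₀∘(1 + a₁ + a₁² + ⋯ + a₁^p). -/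
theorem iterate_affine_apply_zero {S : Type*} [CommSemiring S] (a₀ a₁ : S) (n : ℕ) :
    (fun x => a₀ + a₁ * x)^[n] 0 = a₀ * ∑ i ∈ Finset.range n, a₁ ^ i := by
  induction n with
  | zero => simp
  | succ n ih =>
    rw [Function.iterate_succ_apply', ih, geom_sum_succ]
    ring

/-- In a commutative semiring, if `a₁` is `p`-stable (the partial sums
`1 + a₁ + ⋯ + a₁^p` and `1 + a₁ + ⋯ + a₁^(p+1)` coincide), then the affine
map `f x = a₀ + a₁ x` is `(p+1)`-stable and
`f^[p+1] 0 = a₀ (1 + a₁ + ⋯ + a₁^p)`. -/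
theorem affine_stable {S : Type*} [CommSemiring S] (p : ℕ) (a₀ a₁ : S)
    (hstable : ∑ i ∈ Finset.range (p + 2), a₁ ^ i = ∑ i ∈ Finset.range (p + 1), a₁ ^ i) :
    letI f : S → S := fun x => a₀ + a₁ * x
    f^[p + 2] 0 = f^[p + 1] 0 ∧
      f^[p + 1] 0 = a₀ * ∑ i ∈ Finset.range (p + 1), a₁ ^ i := by
  simp only [iterate_affine_apply_zero, hstable, and_self]
end

section
/- Consider the context-free grammar with one nonterminal x and productions x → aᵢ x^i for each i = 0,…,k (terminal aᵢ followed by i copies of x). A commutative monomial a₀^{r₀} a₁^{r₁} ⋯ aₖ^{rₖ} is derivable (i.e., is the multiset of terminal labels of some derivation tree) if and only if r₀ = 1 + Σ_{i=1}^{k} (i−1)·rᵢ. -/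
/-!
Give a node labelled `aᵢ` the weight `1 - i`: it is one node with `i` outgoing edges, so every
derivation tree has total weight `#nodes - #edges = 1`, and for a monomial this total is
`r₀ - Σ (i - 1) rᵢ`. Conversely, a monomial of weight `1` with some `rᵢ ≠ 0`, `i ≥ 1`, has
`r₀ ≥ i - 1`; removing one `aᵢ` and `i - 1` copies of `a₀` leaves a smaller monomial of weight `1`,
derivable by induction, and the removed letters are put back by grafting its tree below a new
`aᵢ`-root together with `i - 1` leaves.
-/

/-- `Derivable k r` says that the commutative monomial with degree vector `r`
(where `r i` is the number of occurrences of the terminal `aᵢ`) is the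
multiset of labels of some derivation tree of the grammar with productions
`x → aᵢ x^i` for `i = 0, …, k`: a tree whose root is labeled `aᵢ` (for some
`i ≤ k`) has exactly `i` derivation subtrees. -/
inductive Derivable (k : ℕ) : (ℕ → ℕ) → Prop
  | node (i : ℕ) (hik : i ≤ k) (t : Fin i → ℕ → ℕ)
      (ht : ∀ j : Fin i, Derivable k (t j)) :
      Derivable k (fun m => (if m = i then 1 else 0) + ∑ j : Fin i, t j m)

open Finset

def weight (k : ℕ) : (ℕ → ℕ) →+ ℤ :=
  AddMonoidHom.mk' (fun r => ∑ m ∈ range (k + 1), (1 - m : ℤ) * r m) fun r s => by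
    simp only [Pi.add_apply, Nat.cast_add, mul_add, sum_add_distrib]

section weight

variable {k : ℕ} {r : ℕ → ℕ}

theorem weight_apply : weight k r = ∑ m ∈ range (k + 1), (1 - m : ℤ) * r m := rfl

theorem weight_single {i : ℕ} (hi : i ≤ k) : weight k (Pi.single i 1) = 1 - i := by
  simp [weight_apply, Pi.single_apply, Nat.lt_succ_iff.mpr hi]

theorem weight_eq_sub : weight k r = r 0 - ((∑ i ∈ Icc 1 k, (i - 1) * r i : ℕ) : ℤ) := by
  rw [weight_apply, range_eq_Ico, sum_eq_sum_Ico_succ_bot (by omega : 0 < k + 1), zero_add,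
    Ico_add_one_right_eq_Icc, Nat.cast_sum, Nat.cast_zero, sub_zero, one_mul, sub_eq_add_neg, ← sum_neg_distrib]
  refine congrArg _ (sum_congr rfl fun i hi => ?_)
  rw [Nat.cast_mul, Nat.cast_sub (mem_Icc.mp hi).1]
  ring

theorem weight_eq_one_iff : weight k r = 1 ↔ r 0 = 1 + ∑ i ∈ Icc 1 k, (i - 1) * r i := by
  rw [weight_eq_sub]
  omega

theorem lt_of_weight_eq_one (h : weight k r = 1) {i : ℕ} (hi : i ∈ Icc 1 k) (hri : r i ≠ 0) :
    i - 1 < r 0 := by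
  calc i - 1 ≤ (i - 1) * r i := Nat.le_mul_of_pos_right _ (Nat.pos_of_ne_zero hri)
    _ ≤ ∑ i ∈ Icc 1 k, (i - 1) * r i :=
      single_le_sum (f := fun i => (i - 1) * r i) (fun _ _ => Nat.zero_le _) hi
    _ < r 0 := by rw [weight_eq_one_iff.mp h]; omega

theorem weight_single_add_nsmul_single_zero {n : ℕ} (hn : n + 1 ≤ k) :
    weight k (Pi.single (n + 1) 1 + n • Pi.single 0 1) = 0 := by
  rw [map_add, map_nsmul, weight_single hn, weight_single k.zero_le]
  push_cast
  ring

theorem eq_single_zero_of_weight_eq_one (hsupp : ∀ m, k < m → r m = 0) (hr : weight k r = 1)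
    (hinner : ∀ i ∈ Icc 1 k, r i = 0) : r = Pi.single 0 1 := by
  have hr0 := weight_eq_one_iff.mp hr
  rw [sum_eq_zero fun i hi => by rw [hinner i hi, mul_zero], add_zero] at hr0
  ext m
  rcases Nat.eq_zero_or_pos m with rfl | hm
  · rw [hr0, Pi.single_eq_same]
  · rw [Pi.single_eq_of_ne hm.ne']
    by_cases hmk : m ≤ k
    · exact hinner m (mem_Icc.mpr ⟨hm, hmk⟩)
    · exact hsupp m (not_le.mp hmk)

end weight

namespace Derivable

variable {k : ℕ} {r : ℕ → ℕ}

theorem node_eq (i : ℕ) (t : Fin i → ℕ → ℕ) :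
    (fun m => (if m = i then 1 else 0) + ∑ j : Fin i, t j m) = Pi.single i 1 + ∑ j, t j := by
  ext m
  simp [Pi.single_apply]

theorem weight_eq_one (h : Derivable k r) : weight k r = 1 := by
  induction h with
  | node i hik t _ ih =>
    simp [node_eq, map_sum, ih, weight_single hik]

theorem leaf : Derivable k (Pi.single 0 1) := by
  have := node (k := k) 0 (Nat.zero_le k) Fin.elim0 fun j => j.elim0
  rwa [node_eq, univ_eq_empty, sum_empty, add_zero] at this

theorem graft (h : Derivable k r) {n : ℕ} (hn : n + 1 ≤ k) :
    Derivable k (r + (Pi.single (n + 1) 1 + n • Pi.single 0 1)) := by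
  have := node (n + 1) hn (Fin.cons r fun _ => Pi.single 0 1) (Fin.cases h fun _ => leaf)
  rw [node_eq, Fin.sum_univ_succ] at this
  simpa [add_comm, add_left_comm] using this

theorem of_weight_eq_one (hsupp : ∀ m, k < m → r m = 0) (hr : weight k r = 1) :
    Derivable k r := by
  induction hsize : ∑ m ∈ range (k + 1), r m using Nat.strong_induction_on generalizing r with
  | _ N ih =>
  by_cases hinner : ∀ i ∈ Icc 1 k, r i = 0
  · exact eq_single_zero_of_weight_eq_one hsupp hr hinner ▸ leaf
  push Not at hinner
  obtain ⟨i, hi, hri⟩ := hinner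
  obtain ⟨n, rfl⟩ : ∃ n, i = n + 1 := ⟨i - 1, by have := (mem_Icc.mp hi).1; omega⟩
  have hnk := (mem_Icc.mp hi).2
  set s : ℕ → ℕ := Pi.single (n + 1) 1 + n • Pi.single 0 1
  have hsr : s ≤ r := by
    have := lt_of_weight_eq_one hr hi hri
    intro m
    simp only [s, Pi.add_apply, Pi.smul_apply, Pi.single_apply, smul_eq_mul]
    split_ifs <;> subst_vars <;> omega
  rw [← tsub_add_cancel_of_le hsr] at hr ⊢
  rw [map_add, weight_single_add_nsmul_single_zero hnk, add_zero] at hr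
  refine graft (ih _ ?_ (fun m hm => ?_) hr rfl) hnk
  · rw [← hsize]
    refine sum_lt_sum (fun m _ => tsub_le_self) ⟨n + 1, mem_range.mpr (by omega), ?_⟩
    exact tsub_lt_self (Nat.pos_of_ne_zero hri) (by simp [s])
  · simp [hsupp m hm]

end Derivable

/-- A monomial `a₀^{r₀} ⋯ aₖ^{rₖ}` is derivable in the grammar with
productions `x → aᵢ x^i` (for `i = 0, …, k`) if and only if
`r₀ = 1 + Σ_{i=1}^{k} (i−1)·rᵢ`. -/
theorem derivable_iff_degree_condition (k : ℕ) (r : ℕ → ℕ)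
    (hsupp : ∀ m : ℕ, k < m → r m = 0) :
    Derivable k r ↔ r 0 = 1 + ∑ i ∈ Finset.Icc 1 k, (i - 1) * r i := by
  rw [← weight_eq_one_iff]
  exact ⟨Derivable.weight_eq_one, Derivable.of_weight_eq_one hsupp⟩
end

section
/- Fix p ≥ 0 and let Trop⁺ₚ be the structure whose elements are multisets of size p+1 over ℝ₊ ∪ {∞}, with x ⊕ y := minₚ(x ⊎ y) (the p+1 smallest elements of the multiset union) and x ⊗ y := minₚ(x + y) (the p+1 smallest pairwise sums), zero 0ₚ = {∞,…,∞} and one 1ₚ = {0,∞,…,∞}. Then the identities minₚ(minₚ(x) ⊎ minₚ(y)) = minₚ(x ⊎ y) and minₚ(minₚ(x) + minₚ(y)) = minₚ(x + y) hold for all finite multisets x, y of size ≥ p+1, and consequently Trop⁺ₚ is a commutative semiring. -/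
open scoped Classical

/-- `minp p x` retains the `p+1` smallest elements (with multiplicity) of a
multiset `x` over `ℝ₊ ∪ {∞}` (modeled as `ENNReal`). -/
noncomputable def minp (p : ℕ) (x : Multiset ENNReal) : Multiset ENNReal :=
  ((x.sort (· ≤ ·)).take (p + 1) : List ENNReal)

/-- `msum x y` is the multiset of pairwise sums `⟦u + v : u ∈ x, v ∈ y⟧`. -/
noncomputable def msum (x y : Multiset ENNReal) : Multiset ENNReal :=
  x.bind fun u => y.map fun v => u + v

/-!
When `p + 1 ≤ card x`, `minp p x` is the unique `t ≤ x` of size `p + 1` whose elements all lie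
below those of `x - t`. Hence appending to a multiset `a` elements that each lie above `p + 1`
elements of `a` does not change `minp p a`. Every element of `x - minp p x` lies above all of
`minp p x`, and a sum `u + v` with `u ∈ x - minp p x` lies above the `p + 1` sums `w + v`,
`w ∈ minp p x`; so `minₚ` may be applied to the arguments of `⊎` and of `+` before the final
`minₚ` without changing the result. The semiring laws then reduce to those of `⊎` and `+` on
multisets.
-/

open Multiset

lemma minp_add_drop (p : ℕ) (x : Multiset ENNReal) :
    minp p x + ((x.sort (· ≤ ·)).drop (p + 1) : List ENNReal) = x := by
  rw [minp, coe_add, List.take_append_drop, sort_eq]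

lemma minp_le (p : ℕ) (x : Multiset ENNReal) : minp p x ≤ x :=
  (le_add_right _ _).trans_eq (minp_add_drop p x)

lemma card_minp (p : ℕ) (x : Multiset ENNReal) : card (minp p x) = min (p + 1) (card x) := by
  simp [minp]

lemma le_of_mem_minp_of_mem_sub {p : ℕ} {x : Multiset ENNReal} {a b : ENNReal}
    (ha : a ∈ minp p x) (hb : b ∈ x - minp p x) : a ≤ b := by
  rw [tsub_eq_of_eq_add_rev (minp_add_drop p x).symm] at hb
  have hsorted := List.take_append_drop (p + 1) (x.sort (· ≤ ·)) ▸ pairwise_sort x (· ≤ ·)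
  exact List.pairwise_append.mp hsorted |>.2.2 a ha b hb

lemma minp_eq_of_forall_le {p : ℕ} {x t : Multiset ENNReal} (hle : t ≤ x)
    (hcard : card t = p + 1) (hbelow : ∀ a ∈ t, ∀ b ∈ x - t, a ≤ b) : minp p x = t := by
  have hsort : x.sort (· ≤ ·) = t.sort (· ≤ ·) ++ (x - t).sort (· ≤ ·) := by
    refine List.Perm.eq_of_pairwise' (pairwise_sort _ _) ?_ ?_
    · exact List.pairwise_append.mpr ⟨pairwise_sort _ _, pairwise_sort _ _,
        fun a ha b hb => hbelow a ((mem_sort _).mp ha) b ((mem_sort _).mp hb)⟩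
    · rw [← coe_eq_coe, ← coe_add, sort_eq, sort_eq, sort_eq, add_tsub_cancel_of_le hle]
  rw [minp, hsort, List.take_left' (by simp [hcard]), sort_eq]

lemma forall_mem_minp_le {p : ℕ} {x : Multiset ENNReal} {c : ENNReal}
    (hc : p + 1 ≤ card (x.filter (· ≤ c))) : ∀ a ∈ minp p x, a ≤ c := by
  intro a ha
  by_contra! hca
  have hrest : (x - minp p x).filter (· ≤ c) = 0 :=
    filter_eq_nil.mpr fun b hb hbc => (hca.trans_le (le_of_mem_minp_of_mem_sub ha hb)).not_ge hbc
  have hsplit : x.filter (· ≤ c) = (minp p x).filter (· ≤ c) := by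
    conv_lhs => rw [← add_tsub_cancel_of_le (minp_le p x)]
    rw [filter_add, hrest, add_zero]
  have hlt : card ((minp p x).filter (· ≤ c)) < card (minp p x) :=
    card_lt_card <| (filter_le _ _).lt_of_ne fun h => hca.not_ge (filter_eq_self.mp h a ha)
  have := card_minp p x
  rw [hsplit] at hc
  omega

lemma le_card_filter_minp {p : ℕ} {x : Multiset ENNReal} {c : ENNReal}
    (hc : c ∈ x - minp p x) : p + 1 ≤ card ((minp p x).filter (· ≤ c)) := by
  rw [filter_eq_self.mpr fun a ha => le_of_mem_minp_of_mem_sub ha hc, card_minp]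
  have hpos := card_pos_iff_exists_mem.mpr ⟨c, hc⟩
  rw [card_sub (minp_le p x), card_minp] at hpos
  omega

lemma minp_add_of_le_card_filter {p : ℕ} {a r : Multiset ENNReal}
    (hr : ∀ c ∈ r, p + 1 ≤ card (a.filter (· ≤ c))) : minp p (a + r) = minp p a := by
  rcases empty_or_exists_mem r with rfl | ⟨c, hc⟩
  · rw [add_zero]
  have hcard : card (minp p a) = p + 1 := by
    have := (hr c hc).trans (card_le_card (filter_le _ a))
    rw [card_minp]; omega
  refine minp_eq_of_forall_le ((minp_le p a).trans (le_add_right a r)) hcard fun b hb d hd => ?_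
  rw [← tsub_add_eq_add_tsub (minp_le p a), mem_add] at hd
  exact hd.elim (le_of_mem_minp_of_mem_sub hb) fun hd => forall_mem_minp_le (hr d hd) b hb

lemma minp_add_minp_left (p : ℕ) (x y : Multiset ENNReal) :
    minp p (minp p x + y) = minp p (x + y) := by
  have hx : x + y = (minp p x + y) + (x - minp p x) := by
    rw [add_right_comm, add_tsub_cancel_of_le (minp_le p x)]
  rw [hx]
  exact (minp_add_of_le_card_filter fun c hc => (le_card_filter_minp hc).trans
    (card_le_card (filter_le_filter (· ≤ c) (le_add_right _ _)))).symm

lemma minp_add_minp_right (p : ℕ) (x y : Multiset ENNReal) :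
    minp p (x + minp p y) = minp p (x + y) := by
  rw [add_comm, minp_add_minp_left, add_comm]

lemma minp_replicate (p n : ℕ) (a : ENNReal) :
    minp p (replicate n a) = replicate (min (p + 1) n) a :=
  eq_replicate.mpr ⟨by rw [card_minp, card_replicate],
    fun _ hb => eq_of_mem_replicate (mem_of_le (minp_le _ _) hb)⟩

lemma minp_add_replicate_top {p : ℕ} {x : Multiset ENNReal} (hx : card x = p + 1) (n : ℕ) :
    minp p (x + replicate n ⊤) = x :=
  minp_eq_of_forall_le (le_add_right _ _) hx fun _ _ b hb => by
    rw [add_tsub_cancel_left] at hb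
    exact eq_of_mem_replicate hb ▸ le_top

lemma msum_comm (x y : Multiset ENNReal) : msum x y = msum y x := by
  simp_rw [msum, bind_map_comm x y, add_comm]

lemma msum_assoc (x y z : Multiset ENNReal) : msum (msum x y) z = msum x (msum y z) := by
  simp only [msum, bind_assoc, bind_map, map_bind, map_map, Function.comp_def, add_assoc]

lemma add_msum (x y z : Multiset ENNReal) : msum (x + y) z = msum x z + msum y z :=
  add_bind _ _ _

lemma msum_add (x y z : Multiset ENNReal) : msum x (y + z) = msum x y + msum x z := by
  rw [msum_comm, add_msum, msum_comm y, msum_comm z]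

lemma msum_singleton (x : Multiset ENNReal) (v : ENNReal) : msum x {v} = x.map (· + v) := by
  simp [msum, bind_singleton]

lemma card_msum (x y : Multiset ENNReal) : card (msum x y) = card x * card y := by
  simp [msum, card_bind]

lemma msum_replicate_top (x : Multiset ENNReal) (n : ℕ) :
    msum x (replicate n ⊤) = replicate (card x * n) ⊤ := by
  refine eq_replicate.mpr ⟨by rw [card_msum, card_replicate], fun b hb => ?_⟩
  obtain ⟨u, -, hb⟩ := mem_bind.mp hb
  obtain ⟨v, hv, rfl⟩ := mem_map.mp hb
  rw [eq_of_mem_replicate hv, add_top]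

lemma map_add_le_msum (x : Multiset ENNReal) {y : Multiset ENNReal} {v : ENNReal} (hv : v ∈ y) :
    x.map (· + v) ≤ msum x y := by
  rw [← msum_singleton, ← cons_erase hv, ← singleton_add, msum_add]
  exact le_add_right _ _

lemma msum_zero_cons_replicate_top (x : Multiset ENNReal) (n : ℕ) :
    msum x (0 ::ₘ replicate n ⊤) = x + replicate (card x * n) ⊤ := by
  rw [← singleton_add, msum_add, msum_singleton, msum_replicate_top]
  simp

lemma minp_msum_minp_left (p : ℕ) (x y : Multiset ENNReal) :
    minp p (msum (minp p x) y) = minp p (msum x y) := by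
  have hx : msum x y = msum (minp p x) y + msum (x - minp p x) y := by
    rw [← add_msum, add_tsub_cancel_of_le (minp_le p x)]
  rw [hx]
  refine (minp_add_of_le_card_filter fun c hc => ?_).symm
  obtain ⟨u, hu, hc⟩ := mem_bind.mp hc
  obtain ⟨v, hv, rfl⟩ := mem_map.mp hc
  calc p + 1 ≤ card ((minp p x).filter (· ≤ u)) := le_card_filter_minp hu
    _ ≤ card (((minp p x).map (· + v)).filter (· ≤ u + v)) := by
      rw [filter_map, card_map]
      exact card_le_card (monotone_filter_right _ fun w hw => add_le_add_left hw v)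
    _ ≤ card ((msum (minp p x) y).filter (· ≤ u + v)) :=
      card_le_card (filter_le_filter _ (map_add_le_msum _ hv))

lemma minp_msum_minp_right (p : ℕ) (x y : Multiset ENNReal) :
    minp p (msum x (minp p y)) = minp p (msum x y) := by
  rw [msum_comm, minp_msum_minp_left, msum_comm]

/-- The defining identities of `Trop⁺ₚ` hold (`minₚ` may be deferred to the
end of a computation), and consequently `Trop⁺ₚ` — multisets of size `p+1`
over `ℝ₊ ∪ {∞}` with `x ⊕ y := minₚ(x ⊎ y)`, `x ⊗ y := minₚ(x + y)`,
zero `0ₚ = ⟦∞,…,∞⟧` and one `1ₚ = ⟦0,∞,…,∞⟧` — is a commutative semiring.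
(Multiset union `⊎` is written `+` on `Multiset`.) -/
theorem tropP_identities_and_semiring (p : ℕ) :
    (∀ x y : Multiset ENNReal,
      p + 1 ≤ Multiset.card x → p + 1 ≤ Multiset.card y →
        minp p (minp p x + minp p y) = minp p (x + y) ∧
        minp p (msum (minp p x) (minp p y)) = minp p (msum x y)) ∧
    (letI zp : Multiset ENNReal := Multiset.replicate (p + 1) ⊤
     letI op : Multiset ENNReal := (0 : ENNReal) ::ₘ Multiset.replicate p ⊤
     letI add : Multiset ENNReal → Multiset ENNReal → Multiset ENNReal :=
       fun x y => minp p (x + y)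
     letI mul : Multiset ENNReal → Multiset ENNReal → Multiset ENNReal :=
       fun x y => minp p (msum x y)
     (∀ x y : Multiset ENNReal, Multiset.card x = p + 1 → Multiset.card y = p + 1 →
        add x y = add y x ∧ mul x y = mul y x) ∧
     (∀ x y z : Multiset ENNReal, Multiset.card x = p + 1 →
        Multiset.card y = p + 1 → Multiset.card z = p + 1 →
        add (add x y) z = add x (add y z) ∧
        mul (mul x y) z = mul x (mul y z) ∧
        mul x (add y z) = add (mul x y) (mul x z)) ∧
     (∀ x : Multiset ENNReal, Multiset.card x = p + 1 →
        add x zp = x ∧ mul x op = x ∧ mul x zp = zp)) := by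
  refine ⟨fun x y _ _ => ⟨?_, ?_⟩, fun x y _ _ => ⟨?_, ?_⟩,
    fun x y z _ _ _ => ⟨?_, ?_, ?_⟩, fun x hx => ⟨?_, ?_, ?_⟩⟩ <;> beta_reduce
  · rw [minp_add_minp_left, minp_add_minp_right]
  · rw [minp_msum_minp_left, minp_msum_minp_right]
  · rw [add_comm]
  · rw [msum_comm]
  · rw [minp_add_minp_left, minp_add_minp_right, add_assoc]
  · rw [minp_msum_minp_left, minp_msum_minp_right, msum_assoc]
  · rw [minp_msum_minp_right, minp_add_minp_left, minp_add_minp_right, msum_add]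
  · exact minp_add_replicate_top hx _
  · rw [msum_zero_cons_replicate_top, minp_add_replicate_top hx]
  · rw [msum_replicate_top, minp_replicate, hx,
      min_eq_left (Nat.le_mul_of_pos_left _ p.succ_pos)]
end
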